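/- Let m, n ∈ ℕ and let n₁, …, n_m be positive integers such that n − 1 = Σ_{i=1}^m (n_i − 1); let 1 ≤ q ≤ ∞. For each i ∈ {1, …, m} let Z_i, Y_i be Banach spaces and U_i a bounded linear operator from Z_i to Y_i. Let U : ℓ_∞^m({Z_i}) → ℓ_q^m({Y_i}) be the diagonal operator U(z₁, …, z_m) = (U₁(z₁), …, U_m(z_m)). Then e_n(U) ≤ (Σ_{i=1}^m e_{n_i}(U_i)^q)^{1/q} (with the right-hand side read as max_i e_{n_i}(U_i) when q = ∞). -/

import Mathlib

open Metric Set
open scoped ENNReal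

/-- The `n`-th (dyadic) entropy number of a bounded linear operator `T : X → Y`:
the infimum of all `ε > 0` such that the image of the closed unit ball of `X`
can be covered by `2 ^ (n - 1)` closed balls of radius `ε` in `Y`. -/
noncomputable def entropyNum {X Y : Type*} [NormedAddCommGroup X] [NormedSpace ℝ X]
    [NormedAddCommGroup Y] [NormedSpace ℝ Y] (n : ℕ) (T : X →L[ℝ] Y) : ℝ :=
  sInf {ε : ℝ | 0 < ε ∧ ∃ S : Finset Y, S.card ≤ 2 ^ (n - 1) ∧
    T '' closedBall 0 1 ⊆ ⋃ y ∈ S, closedBall y ε}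

/-- The `n`-th (dyadic) inner entropy number of a bounded linear operator `T : X → Y`:
the supremum of all `ε > 0` such that there are `2 ^ (n - 1) + 1` points in the closed
unit ball of `X` whose images under `T` are pairwise at distance at least `2 * ε`. -/
noncomputable def innerEntropyNum {X Y : Type*} [NormedAddCommGroup X] [NormedSpace ℝ X]
    [NormedAddCommGroup Y] [NormedSpace ℝ Y] (n : ℕ) (T : X →L[ℝ] Y) : ℝ :=
  sSup {ε : ℝ | 0 < ε ∧ ∃ x : Fin (2 ^ (n - 1) + 1) → X, (∀ i, ‖x i‖ ≤ 1) ∧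
    ∀ i j, i ≠ j → 2 * ε ≤ ‖T (x i) - T (x j)‖}

open Filter Topology

/-!
Cover the image of the unit ball under each `Uᵢ` by `2 ^ (nᵢ - 1)` balls of radius slightly
larger than `e_{nᵢ}(Uᵢ)`. Since the unit ball of `ℓ_∞^m({Zᵢ})` is the product of the unit balls
of the `Zᵢ`, the products of these centres, `∏ᵢ 2 ^ (nᵢ - 1) = 2 ^ (n - 1)` in number, cover
the image of the unit ball under `U` with balls whose radius is the `ℓ_q`-norm of the vector
of radii. Letting the slack tend to zero gives the bound.
-/

theorem PiLp.norm_le_norm_toLp_of_norm_apply_le {ι : Type*} [Fintype ι] {p : ℝ≥0∞}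
    [Fact (1 ≤ p)] {β : ι → Type*} [∀ i, SeminormedAddCommGroup (β i)] (x : PiLp p β)
    {r : ι → ℝ} (h : ∀ i, ‖x i‖ ≤ r i) : ‖x‖ ≤ ‖WithLp.toLp p r‖ := by
  have h' : ∀ i, ‖x i‖ ≤ ‖r i‖ := fun i => (h i).trans (le_abs_self _)
  rcases eq_or_ne p ⊤ with rfl | hp
  · rw [PiLp.norm_eq_ciSup, PiLp.norm_eq_ciSup]
    exact ciSup_mono (Set.finite_range _).bddAbove h'
  · have hp0 : 0 < p.toReal :=
      ENNReal.toReal_pos (zero_lt_one.trans_le Fact.out).ne' hp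
    rw [PiLp.norm_eq_sum hp0, PiLp.norm_eq_sum hp0]
    gcongr with i
    exact h' i

section EntropyNum

variable {X Y : Type*} [NormedAddCommGroup X] [NormedSpace ℝ X]
  [NormedAddCommGroup Y] [NormedSpace ℝ Y] {n : ℕ} {T : X →L[ℝ] Y}

theorem entropyNum_nonneg (n : ℕ) (T : X →L[ℝ] Y) : 0 ≤ entropyNum n T :=
  Real.sInf_nonneg fun _ hε => hε.1.le

theorem entropyNum_le_of_cover {r : ℝ} (hr : 0 ≤ r) (S : Finset Y) (hS : S.card ≤ 2 ^ (n - 1))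
    (hcov : T '' closedBall 0 1 ⊆ ⋃ y ∈ S, closedBall y r) : entropyNum n T ≤ r := by
  refine le_of_forall_pos_le_add fun δ hδ => csInf_le ⟨0, fun ε hε => hε.1.le⟩ ?_
  refine ⟨by linarith, S, hS, hcov.trans ?_⟩
  exact iUnion₂_mono fun y _ => closedBall_subset_closedBall (by linarith)

theorem exists_cover_of_entropyNum_lt {ε : ℝ} (hε : entropyNum n T < ε) :
    ∃ S : Finset Y, S.card ≤ 2 ^ (n - 1) ∧ T '' closedBall 0 1 ⊆ ⋃ y ∈ S, closedBall y ε := by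
  have hball : T '' closedBall 0 1 ⊆ closedBall 0 (‖T‖ + 1) := by
    rintro _ ⟨z, hz, rfl⟩
    rw [mem_closedBall_zero_iff] at hz ⊢
    calc ‖T z‖ ≤ ‖T‖ * ‖z‖ := T.le_opNorm z
      _ ≤ ‖T‖ * 1 := by gcongr
      _ ≤ ‖T‖ + 1 := by linarith [norm_nonneg T]
  have hne : {ε : ℝ | 0 < ε ∧ ∃ S : Finset Y, S.card ≤ 2 ^ (n - 1) ∧
      T '' closedBall 0 1 ⊆ ⋃ y ∈ S, closedBall y ε}.Nonempty :=
    ⟨‖T‖ + 1, by positivity, {0}, by simpa using Nat.one_le_two_pow, by simpa using hball⟩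
  obtain ⟨ε', ⟨-, S, hS, hcov⟩, hlt⟩ := exists_lt_of_csInf_lt hne hε
  exact ⟨S, hS, hcov.trans <| iUnion₂_mono fun y _ => closedBall_subset_closedBall hlt.le⟩

end EntropyNum

section Diagonal

variable {ι : Type*} [Fintype ι] {q : ℝ≥0∞} [Fact (1 ≤ q)] {Z Y : ι → Type*}
  [∀ i, NormedAddCommGroup (Z i)] [∀ i, NormedSpace ℝ (Z i)]
  [∀ i, NormedAddCommGroup (Y i)] [∀ i, NormedSpace ℝ (Y i)]
  {n : ℕ} {nn : ι → ℕ} {Ui : ∀ i, Z i →L[ℝ] Y i} {U : PiLp ⊤ Z →L[ℝ] PiLp q Y}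

theorem entropyNum_diagonal_le_of_lt (hsum : n - 1 = ∑ i, (nn i - 1))
    (hU : ∀ z i, U z i = Ui i (z i)) {ε : ι → ℝ} (hε : ∀ i, entropyNum (nn i) (Ui i) < ε i) :
    entropyNum n U ≤ ‖WithLp.toLp q ε‖ := by
  classical
  choose S hS hcov using fun i => exists_cover_of_entropyNum_lt (hε i)
  refine entropyNum_le_of_cover (norm_nonneg _)
    ((Fintype.piFinset S).image (WithLp.toLp q)) ?_ ?_
  · calc ((Fintype.piFinset S).image (WithLp.toLp q)).card
        ≤ (Fintype.piFinset S).card := Finset.card_image_le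
      _ = ∏ i, (S i).card := Fintype.card_piFinset S
      _ ≤ ∏ i, 2 ^ (nn i - 1) := Finset.prod_le_prod' fun i _ => hS i
      _ = 2 ^ (n - 1) := by rw [Finset.prod_pow_eq_pow_sum, hsum]
  · rintro _ ⟨z, hz, rfl⟩
    have hzi : ∀ i, z i ∈ closedBall 0 1 := fun i =>
      mem_closedBall_zero_iff.2 ((PiLp.norm_apply_le z i).trans (mem_closedBall_zero_iff.1 hz))
    choose y hy hyz using fun i => mem_iUnion₂.1 (hcov i ⟨z i, hzi i, rfl⟩)
    refine mem_iUnion₂.2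
      ⟨WithLp.toLp q y, Finset.mem_image_of_mem _ (Fintype.mem_piFinset.2 hy), ?_⟩
    rw [mem_closedBall, dist_eq_norm]
    refine PiLp.norm_le_norm_toLp_of_norm_apply_le _ fun i => ?_
    simpa [hU, dist_eq_norm] using hyz i

theorem entropyNum_diagonal_le (hsum : n - 1 = ∑ i, (nn i - 1))
    (hU : ∀ z i, U z i = Ui i (z i)) :
    entropyNum n U ≤ ‖WithLp.toLp q fun i => entropyNum (nn i) (Ui i)‖ := by
  set e := fun i => entropyNum (nn i) (Ui i)
  have hlim : Tendsto (fun δ : ℝ => ‖WithLp.toLp q fun i => e i + δ‖) (𝓝[>] 0)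
      (𝓝 ‖WithLp.toLp q e‖) := by
    have hcont : Continuous fun δ : ℝ => ‖WithLp.toLp q fun i => e i + δ‖ := by fun_prop
    simpa using hcont.continuousWithinAt.tendsto (x := 0) (s := Ioi 0)
  refine ge_of_tendsto hlim (eventually_nhdsWithin_of_forall fun δ hδ => ?_)
  exact entropyNum_diagonal_le_of_lt hsum hU fun i => lt_add_of_pos_right _ hδ

end Diagonal

theorem entropy_diagonal_sum_general (m n : ℕ)
    (nn : Fin m → ℕ) (hsum : n - 1 = ∑ i, (nn i - 1))
    (q : ℝ≥0∞) [Fact (1 ≤ q)]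
    (Z Y : Fin m → Type*)
    [∀ i, NormedAddCommGroup (Z i)] [∀ i, NormedSpace ℝ (Z i)]
    [∀ i, NormedAddCommGroup (Y i)] [∀ i, NormedSpace ℝ (Y i)]
    (Ui : ∀ i, Z i →L[ℝ] Y i)
    (U : PiLp ⊤ Z →L[ℝ] PiLp q Y) (hU : ∀ z i, U z i = Ui i (z i)) :
    entropyNum n U ≤
      if q ≠ ⊤ then (∑ i, entropyNum (nn i) (Ui i) ^ q.toReal) ^ (1 / q.toReal)
      else ⨆ i, entropyNum (nn i) (Ui i) := by
  refine (entropyNum_diagonal_le hsum hU).trans_eq ?_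
  have hnorm : ∀ i, ‖entropyNum (nn i) (Ui i)‖ = entropyNum (nn i) (Ui i) := fun i =>
    Real.norm_of_nonneg (entropyNum_nonneg _ _)
  split_ifs with hq
  · have hq0 : 0 < q.toReal := ENNReal.toReal_pos (zero_lt_one.trans_le Fact.out).ne' hq
    simp only [PiLp.norm_eq_sum hq0, hnorm]
  · rw [not_ne_iff.1 hq, PiLp.norm_eq_ciSup]
    simp only [hnorm]

/-- Lemma 2.4: if `n - 1 = Σᵢ (nᵢ - 1)` then the diagonal operator
`U : ℓ_∞^m({Zᵢ}) → ℓ_q^m({Yᵢ})` satisfies `e_n(U) ≤ (Σᵢ e_{nᵢ}(Uᵢ)^q)^(1/q)`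
(the right-hand side being `supᵢ e_{nᵢ}(Uᵢ)` when `q = ∞`). -/
theorem entropy_diagonal_sum (m n : ℕ) (hn : 1 ≤ n)
    (nn : Fin m → ℕ) (hnn : ∀ i, 1 ≤ nn i) (hsum : n - 1 = ∑ i, (nn i - 1))
    (q : ℝ≥0∞) [Fact (1 ≤ q)]
    (Z Y : Fin m → Type*)
    [∀ i, NormedAddCommGroup (Z i)] [∀ i, NormedSpace ℝ (Z i)]
    [∀ i, NormedAddCommGroup (Y i)] [∀ i, NormedSpace ℝ (Y i)]
    (Ui : ∀ i, Z i →L[ℝ] Y i)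
    (U : PiLp ⊤ Z →L[ℝ] PiLp q Y) (hU : ∀ z i, U z i = Ui i (z i)) :
    entropyNum n U ≤
      if q ≠ ⊤ then (∑ i, entropyNum (nn i) (Ui i) ^ q.toReal) ^ (1 / q.toReal)
      else ⨆ i, entropyNum (nn i) (Ui i) :=
  entropy_diagonal_sum_general m n nn hsum q Z Y Ui U hU
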